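/- Let a, b be distinct binary sequences of period n ≥ 2, and define for each cyclic shift t the quantity A(M^{(t)}) = n - 2w₂(|σ(a^{(t)}) - σ(b^{(t)})|) if σ(a^{(t)}) > σ(b^{(t)}), and A(M^{(t)}) = 2w₂(|σ(a^{(t)}) - σ(b^{(t)})|) - n otherwise, where σ(c^{(t)}) = Σ_{λ=0}^{n-1} c_{λ+t} 2^λ. Then A(M^{(t)}) = A(M^{(0)}) for all 0 ≤ t ≤ n-1 (shift invariance). -/

import Mathlib

def w2 (a : ℕ) : ℕ := (Nat.digits 2 a).sum

def sigma (n : ℕ) (a : ℕ → ℕ) : ℕ := ∑ l ∈ Finset.range n, a l * 2 ^ l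

/-- A(M^{(t)}) for the matrix with rows the t-shifts of a and b -/
def AM (n : ℕ) (a b : ℕ → ℕ) (t : ℕ) : ℤ :=
  if sigma n (fun l => a (l + t)) > sigma n (fun l => b (l + t)) then
    (n : ℤ) - 2 * w2 (sigma n (fun l => a (l + t)) - sigma n (fun l => b (l + t)))
  else
    2 * w2 (sigma n (fun l => b (l + t)) - sigma n (fun l => a (l + t))) - (n : ℤ)

/-!
Write `n = m + 1`, `σ(a^{(t)}) = 2u + a_t` and `σ(b^{(t)}) = 2v + b_t`. Shifting by one rotates
these `n`-bit numbers to `u + a_t 2^m` and `v + b_t 2^m`. If `a_t = b_t` the difference is just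
halved, which keeps its sign and weight. If `a_t = 1`, `b_t = 0` (the other case is symmetric) the
shifted difference is `2^m + (u - v)` or `2^m - 1 - (v - u - 1)`, and the complement identity
`w₂ x + w₂ y = m` for `x + y + 1 = 2^m` shows that `A(M)` is unchanged.
-/

lemma w2_two_mul_add (a r : ℕ) (hr : r < 2) : w2 (2 * a + r) = w2 a + r := by
  rcases Nat.eq_zero_or_pos (2 * a + r) with h | h
  · obtain ⟨rfl, rfl⟩ : a = 0 ∧ r = 0 := by omega
    rfl
  · rw [w2, add_comm, Nat.digits_add 2 (by norm_num) r a hr (by omega)]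
    simp [w2, add_comm]

lemma w2_two_mul (a : ℕ) : w2 (2 * a) = w2 a := by
  simpa using w2_two_mul_add a 0 (by norm_num)

lemma w2_add_w2_of_add_add_one_eq_two_pow {m x y : ℕ} (h : x + y + 1 = 2 ^ m) :
    w2 x + w2 y = m := by
  induction m generalizing x y with
  | zero =>
    obtain ⟨rfl, rfl⟩ : x = 0 ∧ y = 0 := by simp at h; omega
    rfl
  | succ m ih =>
    rw [pow_succ] at h
    have hhalf : x / 2 + y / 2 + 1 = 2 ^ m := by omega
    rw [← Nat.div_add_mod x 2, ← Nat.div_add_mod y 2, w2_two_mul_add _ _ (Nat.mod_lt _ two_pos),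
      w2_two_mul_add _ _ (Nat.mod_lt _ two_pos), ← ih hhalf]
    omega

lemma w2_two_pow_add {m k : ℕ} (hk : k < 2 ^ m) : w2 (2 ^ m + k) = w2 k + 1 := by
  obtain ⟨c, hc⟩ : ∃ c, k + c + 1 = 2 ^ m := ⟨2 ^ m - 1 - k, by omega⟩
  have hlow := w2_add_w2_of_add_add_one_eq_two_pow hc
  have hhigh := w2_add_w2_of_add_add_one_eq_two_pow (m := m + 1) (x := 2 ^ m + k) (y := c)
    (by rw [pow_succ]; omega)
  omega

def balance (n A B : ℕ) : ℤ :=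
  if A > B then (n : ℤ) - 2 * w2 (A - B) else 2 * w2 (B - A) - (n : ℤ)

lemma AM_eq_balance (n : ℕ) (a b : ℕ → ℕ) (t : ℕ) :
    AM n a b t = balance n (sigma n (fun l => a (l + t))) (sigma n (fun l => b (l + t))) :=
  rfl

lemma balance_add_add (n A B c : ℕ) : balance n (A + c) (B + c) = balance n A B := by
  simp only [balance, Nat.add_sub_add_right, add_lt_add_iff_right, gt_iff_lt]

lemma balance_two_mul (n A B : ℕ) : balance n (2 * A) (2 * B) = balance n A B := by
  simp only [balance, ← Nat.mul_sub, w2_two_mul, gt_iff_lt, Nat.mul_lt_mul_left two_pos]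

lemma balance_swap {n A B : ℕ} (h : A ≠ B) : balance n B A = -balance n A B := by
  unfold balance
  rcases lt_or_gt_of_ne h with h | h
  · simp [h, h.not_gt]
  · simp [h, h.not_gt]

lemma balance_rotate_odd_even {m u v : ℕ} (hu : u < 2 ^ m) (hv : v < 2 ^ m) :
    balance (m + 1) (u + 2 ^ m) v = balance (m + 1) (2 * u + 1) (2 * v) := by
  rw [balance, if_pos (by omega), balance]
  rcases le_or_gt v u with hvu | huv
  · have hdiff : u + 2 ^ m - v = 2 ^ m + (u - v) := by omega
    have hdiff' : 2 * u + 1 - 2 * v = 2 * (u - v) + 1 := by omega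
    rw [if_pos (by omega), hdiff, hdiff', w2_two_pow_add (by omega), w2_two_mul_add _ _ (by norm_num)]
  · have hdiff' : 2 * v - (2 * u + 1) = 2 * (v - u - 1) + 1 := by omega
    have hcompl := w2_add_w2_of_add_add_one_eq_two_pow (m := m) (x := u + 2 ^ m - v)
      (y := v - u - 1) (by omega)
    rw [if_neg (by omega), hdiff', w2_two_mul_add _ _ (by norm_num)]
    push_cast
    omega

lemma balance_rotate {m u v x y : ℕ} (hu : u < 2 ^ m) (hv : v < 2 ^ m) (hx : x ≤ 1) (hy : y ≤ 1) :
    balance (m + 1) (u + x * 2 ^ m) (v + y * 2 ^ m) = balance (m + 1) (2 * u + x) (2 * v + y) := by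
  interval_cases x <;> interval_cases y
  · simp only [zero_mul, add_zero, balance_two_mul]
  · rw [balance_swap (by omega), balance_swap (A := 2 * v + 1) (by omega), one_mul, zero_mul,
      add_zero, add_zero, balance_rotate_odd_even hv hu]
  · simpa using balance_rotate_odd_even hu hv
  · rw [balance_add_add, balance_add_add, balance_two_mul]

lemma sigma_lt_two_pow (n : ℕ) {a : ℕ → ℕ} (ha : ∀ l, a l ≤ 1) : sigma n a < 2 ^ n := by
  induction n with
  | zero => simp [sigma]
  | succ m ih =>
    rw [sigma, Finset.sum_range_succ, pow_succ]
    have : a m * 2 ^ m ≤ 2 ^ m := by nlinarith [ha m]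
    rw [sigma] at ih
    omega

lemma sigma_succ (m : ℕ) (a : ℕ → ℕ) : sigma (m + 1) a = a m * 2 ^ m + sigma m a := by
  rw [sigma, Finset.sum_range_succ, add_comm, sigma]

lemma sigma_succ' (m : ℕ) (a : ℕ → ℕ) :
    sigma (m + 1) a = 2 * sigma m (fun l => a (l + 1)) + a 0 := by
  simp only [sigma, Finset.sum_range_succ', Finset.mul_sum, pow_succ, pow_zero, mul_one]
  congr 1
  exact Finset.sum_congr rfl fun l _ => by ring

lemma sigma_shift (m : ℕ) (a : ℕ → ℕ) (t : ℕ) :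
    sigma (m + 1) (fun l => a (l + t)) = 2 * sigma m (fun l => a (l + (t + 1))) + a t := by
  rw [sigma_succ', zero_add]
  simp only [add_assoc, add_comm 1 t]

lemma sigma_shift_succ (m : ℕ) {a : ℕ → ℕ} (ha : ∀ l, a (l + (m + 1)) = a l) (t : ℕ) :
    sigma (m + 1) (fun l => a (l + (t + 1))) = sigma m (fun l => a (l + (t + 1))) + a t * 2 ^ m := by
  rw [sigma_succ, add_comm, add_left_comm m, ha]

lemma AM_succ (m : ℕ) {a b : ℕ → ℕ} (hbina : ∀ l, a l ≤ 1) (hbinb : ∀ l, b l ≤ 1)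
    (hpera : ∀ l, a (l + (m + 1)) = a l) (hperb : ∀ l, b (l + (m + 1)) = b l) (t : ℕ) :
    AM (m + 1) a b (t + 1) = AM (m + 1) a b t := by
  rw [AM_eq_balance, AM_eq_balance, sigma_shift_succ m hpera, sigma_shift_succ m hperb,
    sigma_shift m a, sigma_shift m b]
  exact balance_rotate (sigma_lt_two_pow m fun _ => hbina _) (sigma_lt_two_pow m fun _ => hbinb _)
    (hbina t) (hbinb t)

theorem AM_shift_invariant_general (n : ℕ) (hn : 2 ≤ n) (a b : ℕ → ℕ)
    (hbina : ∀ l, a l ≤ 1) (hbinb : ∀ l, b l ≤ 1)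
    (hpera : ∀ l, a (l + n) = a l) (hperb : ∀ l, b (l + n) = b l)
    (t : ℕ) :
    AM n a b t = AM n a b 0 := by
  obtain ⟨m, rfl⟩ : ∃ m, n = m + 1 := ⟨n - 1, by omega⟩
  induction t with
  | zero => rfl
  | succ t ih => rw [AM_succ m hbina hbinb hpera hperb, ih]

theorem AM_shift_invariant (n : ℕ) (hn : 2 ≤ n) (a b : ℕ → ℕ)
    (hbina : ∀ l, a l ≤ 1) (hbinb : ∀ l, b l ≤ 1)
    (hpera : ∀ l, a (l + n) = a l) (hperb : ∀ l, b (l + n) = b l)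
    (hne : ∃ l < n, a l ≠ b l)
    (t : ℕ) (ht : t ≤ n - 1) :
    AM n a b t = AM n a b 0 :=
  AM_shift_invariant_general n hn a b hbina hbinb hpera hperb t
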